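/- arXiv:2207.12823 — 4 statements merged into one kernel-verified Lean document; each statement's English description precedes it below -/
import Mathlib

section
/- Let S be a regular semigroup, I a subset of S, and φ an endomorphism of S such that I is a kernel class of φ (i.e., for s ∈ I and t ∈ S, sφ = tφ implies t ∈ I) and such that for all s,t ∈ S \ I, sφ = tφ implies s H t (Green's H-relation). Then for all s,t ∈ S \ I: s L t if and only if sφ L tφ. -/
/-- Green's `L` relation on a semigroup: `s L t` iff `S¹s = S¹t`. -/
def GreenL {S : Type*} [Semigroup S] (s t : S) : Prop :=
  (s = t ∨ ∃ u, u * t = s) ∧ (t = s ∨ ∃ u, u * s = t)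

/-- Green's `R` relation on a semigroup: `s R t` iff `sS¹ = tS¹`. -/
def GreenR {S : Type*} [Semigroup S] (s t : S) : Prop :=
  (s = t ∨ ∃ u, t * u = s) ∧ (t = s ∨ ∃ u, s * u = t)

/-- Green's `H` relation. -/
def GreenH {S : Type*} [Semigroup S] (s t : S) : Prop :=
  GreenL s t ∧ GreenR s t

theorem greenL_iff_of_endomorphism {S : Type*} [Semigroup S]
    (hreg : ∀ s : S, ∃ x, s * x * s = s)
    (φ : S →ₙ* S) (I : Set S)
    (hker : ∀ s ∈ I, ∀ t : S, φ s = φ t → t ∈ I)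
    (hH : ∀ s ∉ I, ∀ t ∉ I, φ s = φ t → GreenH s t)
    (s t : S) (hs : s ∉ I) (ht : t ∉ I) :
    GreenL s t ↔ GreenL (φ s) (φ t) := by
  constructor
  · rintro ⟨h1, h2⟩
    constructor
    · rcases h1 with h | ⟨u, hu⟩
      · exact Or.inl (by rw [h])
      · exact Or.inr ⟨φ u, by rw [← map_mul, hu]⟩
    · rcases h2 with h | ⟨u, hu⟩
      · exact Or.inl (by rw [h])
      · exact Or.inr ⟨φ u, by rw [← map_mul, hu]⟩
  · rintro ⟨h1, h2⟩
    by_cases heq : φ s = φ t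
    · exact (hH s hs t ht heq).1
    rcases h1 with h | ⟨u, hu⟩
    · exact absurd h heq
    rcases h2 with h | ⟨v, hv⟩
    · exact absurd h.symm heq
    obtain ⟨x, hx⟩ := hreg t
    obtain ⟨y, hy⟩ := hreg s
    have ha : φ (s * x * t) = φ s := by
      calc φ (s * x * t) = φ s * φ x * φ t := by rw [map_mul, map_mul]
        _ = (u * φ t) * φ x * φ t := by rw [hu]
        _ = u * (φ t * φ x * φ t) := by simp [mul_assoc]
        _ = u * φ (t * x * t) := by rw [map_mul, map_mul]
        _ = u * φ t := by rw [hx]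
        _ = φ s := hu
    have hb : φ (t * y * s) = φ t := by
      calc φ (t * y * s) = φ t * φ y * φ s := by rw [map_mul, map_mul]
        _ = (v * φ s) * φ y * φ s := by rw [hv]
        _ = v * (φ s * φ y * φ s) := by simp [mul_assoc]
        _ = v * φ (s * y * s) := by rw [map_mul, map_mul]
        _ = v * φ s := by rw [hy]
        _ = φ t := hv
    have haI : s * x * t ∉ I := fun hmem => hs (hker _ hmem s ha)
    have hbI : t * y * s ∉ I := fun hmem => ht (hker _ hmem t hb)
    have hLa : GreenL (s * x * t) s := (hH _ haI s hs ha).1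
    have hLb : GreenL (t * y * s) t := (hH _ hbI t ht hb).1
    constructor
    · rcases hLa.2 with h | ⟨w, hw⟩
      · exact Or.inr ⟨s * x, h.symm⟩
      · exact Or.inr ⟨w * (s * x), by rw [mul_assoc]; exact hw⟩
    · rcases hLb.2 with h | ⟨w, hw⟩
      · exact Or.inr ⟨t * y, h.symm⟩
      · exact Or.inr ⟨w * (t * y), by rw [mul_assoc]; exact hw⟩
end

section
/- Let S be a regular semigroup, I a subset of S, and φ an endomorphism of S such that I is a kernel class of φ and such that for all s,t ∈ S \ I, sφ = tφ implies s H t. Then for all s,t ∈ S \ I: s R t if and only if sφ R tφ. -/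
private lemma key_aux {S : Type*} [Semigroup S]
    (hreg : ∀ s : S, ∃ x, s * x * s = s)
    (φ : S →ₙ* S) (I : Set S)
    (hker : ∀ s ∈ I, ∀ t : S, φ s = φ t → t ∈ I)
    (hH : ∀ s ∉ I, ∀ t ∉ I, φ s = φ t → GreenH s t)
    (s t : S) (hs : s ∉ I) (ht : t ∉ I)
    (u : S) (hu : φ t * u = φ s) : ∃ w, t * w = s := by
  obtain ⟨y, hy⟩ := hreg t
  have h1 : φ (t * y * s) = φ s := by
    have : φ (t * y * s) = φ (t * y * t) * u := by
      rw [map_mul, map_mul, ← hu]; simp [map_mul, mul_assoc]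
    rw [this, hy, hu]
  have hnI : t * y * s ∉ I := fun h => hs (hker _ h s h1)
  have hR : GreenR (t * y * s) s := (hH _ hnI s hs h1).2
  rcases hR.2 with h | ⟨w, hw⟩
  · exact ⟨y * s, by rw [← mul_assoc, ← h]⟩
  · exact ⟨y * s * w, by rw [← mul_assoc, ← mul_assoc, hw]⟩

theorem greenR_iff_of_endomorphism {S : Type*} [Semigroup S]
    (hreg : ∀ s : S, ∃ x, s * x * s = s)
    (φ : S →ₙ* S) (I : Set S)
    (hker : ∀ s ∈ I, ∀ t : S, φ s = φ t → t ∈ I)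
    (hH : ∀ s ∉ I, ∀ t ∉ I, φ s = φ t → GreenH s t)
    (s t : S) (hs : s ∉ I) (ht : t ∉ I) :
    GreenR s t ↔ GreenR (φ s) (φ t) := by
  constructor
  · rintro ⟨h1, h2⟩
    constructor
    · rcases h1 with h | ⟨u, hu⟩
      · exact Or.inl (by rw [h])
      · exact Or.inr ⟨φ u, by rw [← map_mul, hu]⟩
    · rcases h2 with h | ⟨u, hu⟩
      · exact Or.inl (by rw [h])
      · exact Or.inr ⟨φ u, by rw [← map_mul, hu]⟩
  · rintro ⟨h1, h2⟩
    rcases h1 with h | ⟨u, hu⟩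
    · exact (hH s hs t ht h).2
    rcases h2 with h | ⟨v, hv⟩
    · exact ⟨(hH t ht s hs h).2.2, (hH t ht s hs h).2.1⟩
    exact ⟨Or.inr (key_aux hreg φ I hker hH s t hs ht u hu),
      Or.inr (key_aux hreg φ I hker hH t s ht hs v hv)⟩
end

section
/- For n ≥ 3 and G the dihedral subgroup of S_n generated by the n-cycle g and the order-reversing permutation h (ih = n-i+1), the normalizer of G in S_n equals {σ_{x,k} : x, k ∈ {1,…,n}, gcd(k,n) = 1}, and hence has cardinality n·φ(n). -/
/-!
View `Fin n` as the ring `ℤ/nℤ`. Then `finRotate n` is `i ↦ i + 1` and `Fin.revPerm` is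
`i ↦ -1 - i`, so the dihedral group is the group of maps `i ↦ a ± i`. Conjugating such a map by
an affine permutation `i ↦ c + i * k` gives another one with the same sign, so affine permutations
normalize the dihedral group. Conversely, if `σ` normalizes it, then `σ g σ⁻¹` has order `n ≥ 3`.
Every reflection is an involution, so `σ g σ⁻¹` must be a rotation `i ↦ i + k`. Then
`σ (i + 1) = σ i + k`, which forces `σ i = σ 0 + i * k`, and since `σ` is onto, `k` is invertible
mod `n`. The normalizer is therefore parametrized by the pairs `(σ 0, k)` with `k` coprime to `n`.
-/

open Equiv Subgroup
open scoped Fin.CommRing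

lemma finRotate_pow_val {n : ℕ} (k : Fin n) : finRotate n ^ k.val = finCycle k := by
  ext1 i
  rw [Perm.coe_pow, finCycle_eq_finRotate_iterate]

namespace Fin

variable {n : ℕ}

lemma card_coprime_val : Nat.card {k : Fin n // k.val.Coprime n} = n.totient := by
  rw [Nat.totient_eq_card_lt_and_coprime]
  exact Nat.card_congr <| (subtypeEquiv equivSubtype fun k => by simp [Nat.coprime_comm]).trans
    (subtypeSubtypeEquivSubtypeInter (· < n) n.Coprime)

lemma val_add_mul (c i k : Fin n) : (c + i * k).val = (c.val + i.val * k.val) % n := by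
  rw [val_add, val_mul, Nat.add_mod_mod]

lemma exists_add_mul_iff_exists_nat (hn : 2 ≤ n) (f : Fin n → Fin n) :
    (∃ c k : Fin n, k.val.Coprime n ∧ ∀ i, f i = c + i * k) ↔
      ∃ x k : ℕ, 1 ≤ x ∧ x ≤ n ∧ 1 ≤ k ∧ k ≤ n ∧ Nat.gcd k n = 1 ∧
        ∀ i : Fin n, (f i).val = (x - 1 + i.val * k) % n := by
  constructor
  · rintro ⟨c, k, hk, hf⟩
    have hk0 : k.val ≠ 0 := fun h0 => by rw [h0, Nat.coprime_zero_left] at hk; omega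
    refine ⟨c.val + 1, k.val, by omega, c.isLt, by omega, k.isLt.le, hk, fun i => ?_⟩
    rw [hf, val_add_mul, Nat.add_sub_cancel]
  · rintro ⟨x, k, hx1, hxn, -, hkn, hk, hf⟩
    have hk_lt : k < n := lt_of_le_of_ne hkn fun h => by rw [h, Nat.gcd_self] at hk; omega
    exact ⟨⟨x - 1, by omega⟩, ⟨k, hk_lt⟩, hk, fun i => Fin.ext <| by rw [val_add_mul]; exact hf i⟩

lemma add_mul_injective (c : Fin n) {k : Fin n} (hk : k.val.Coprime n) :
    Function.Injective fun i : Fin n => c + i * k := by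
  intro i j hij
  have hmod : i.val * k.val ≡ j.val * k.val [MOD n] := by
    have := congrArg Fin.val (add_left_cancel hij)
    rw [val_mul, val_mul] at this
    exact this
  have := Nat.ModEq.cancel_right_of_coprime (Nat.coprime_comm.mp hk) hmod
  exact Fin.ext <| by rwa [Nat.ModEq, Nat.mod_eq_of_lt i.isLt, Nat.mod_eq_of_lt j.isLt] at this

noncomputable def affinePerm (c k : Fin n) (hk : k.val.Coprime n) : Perm (Fin n) :=
  Equiv.ofBijective _ (Finite.injective_iff_bijective.mp (add_mul_injective c hk))

@[simp]
lemma affinePerm_apply (c k : Fin n) (hk : k.val.Coprime n) (i : Fin n) :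
    affinePerm c k hk i = c + i * k := rfl

variable [NeZero n]

lemma affinePerm_injective :
    Function.Injective fun p : Fin n × {k : Fin n // k.val.Coprime n} =>
      affinePerm p.1 p.2.1 p.2.2 := by
  rintro ⟨c, k, hk⟩ ⟨c', k', hk'⟩ h
  have h0 : c = c' := by simpa using congrArg (· 0) h
  have h1 : c + k = c' + k' := by simpa using congrArg (· 1) h
  subst h0
  simpa using h1

lemma rev_eq_neg_one_sub (i : Fin n) : rev i = -1 - i := by
  obtain ⟨m, rfl⟩ : ∃ m, n = m + 1 := Nat.exists_eq_succ_of_ne_zero (NeZero.ne n)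
  rw [← last_sub, ← neg_last, neg_neg]

lemma one_add_one_ne_zero (hn : 3 ≤ n) : (1 + 1 : Fin n) ≠ 0 := by
  rw [Ne, Fin.ext_iff, val_add, val_one', val_zero, Nat.add_mod_mod, Nat.mod_add_mod,
    Nat.mod_eq_of_lt (by omega)]
  omega

lemma coprime_val_of_mul_eq_one {i k : Fin n} (h : i * k = 1) : k.val.Coprime n := by
  apply Nat.coprime_of_mul_modEq_one i.val
  have := congrArg Fin.val h
  rwa [val_mul, val_one', mul_comm] at this

lemma apply_eq_add_mul_of_apply_add_one {f : Fin n → Fin n} {k : Fin n}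
    (hf : ∀ i, f (i + 1) = f i + k) (i : Fin n) : f i = f 0 + i * k := by
  suffices h : ∀ j : ℕ, f j = f 0 + j * k by simpa using h i.val
  intro j
  induction j with
  | zero => simp
  | succ j ih => rw [Nat.cast_succ, hf, ih]; ring

variable (n) in
def dihedralSubgroup : Subgroup (Perm (Fin n)) where
  carrier := {τ | ∃ a, (∀ i, τ i = a + i) ∨ ∀ i, τ i = a - i}
  one_mem' := ⟨0, .inl fun i => by simp⟩
  mul_mem' := by
    rintro σ τ ⟨a, hσ | hσ⟩ ⟨b, hτ | hτ⟩
    · exact ⟨a + b, .inl fun i => by rw [Perm.mul_apply, hσ, hτ]; ring⟩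
    · exact ⟨a + b, .inr fun i => by rw [Perm.mul_apply, hσ, hτ]; ring⟩
    · exact ⟨a - b, .inr fun i => by rw [Perm.mul_apply, hσ, hτ]; ring⟩
    · exact ⟨a - b, .inl fun i => by rw [Perm.mul_apply, hσ, hτ]; ring⟩
  inv_mem' := by
    rintro τ ⟨a, hτ | hτ⟩
    · exact ⟨-a, .inl fun i => by rw [Perm.inv_eq_iff_eq, hτ]; ring⟩
    · exact ⟨a, .inr fun i => by rw [Perm.inv_eq_iff_eq, hτ]; ring⟩

lemma closure_finRotate_revPerm : closure {finRotate n, revPerm} = dihedralSubgroup n := by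
  apply le_antisymm
  · rw [closure_le, Set.insert_subset_iff, Set.singleton_subset_iff]
    exact ⟨⟨1, .inl fun i => by rw [finRotate_apply, add_comm]⟩,
      ⟨-1, .inr fun i => rev_eq_neg_one_sub i⟩⟩
  · have hg : finRotate n ∈ closure {finRotate n, revPerm} := subset_closure (by simp)
    have hh : revPerm ∈ closure {finRotate n, (revPerm : Perm (Fin n))} :=
      subset_closure (by simp)
    rintro τ ⟨a, hτ | hτ⟩
    · have : τ = finRotate n ^ a.val := by
        ext1 i
        rw [finRotate_pow_val, finCycle_apply, hτ, add_comm]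
      exact this ▸ pow_mem hg _
    · have : τ = finRotate n ^ (a + 1).val * revPerm := by
        ext1 i
        rw [Perm.mul_apply, finRotate_pow_val, finCycle_apply, revPerm_apply, hτ,
          rev_eq_neg_one_sub]
        ring
      exact this ▸ mul_mem (pow_mem hg _) hh

lemma mem_normalizer_of_apply_eq_add_mul {σ : Perm (Fin n)} {c k : Fin n}
    (hσ : ∀ i, σ i = c + i * k) :
    σ ∈ normalizer (dihedralSubgroup n : Set (Perm (Fin n))) := by
  refine mem_normalizer_fintype fun τ ⟨a, hτ⟩ => ?_
  have hconj (i) : (σ * τ * σ⁻¹) (σ i) = σ (τ i) := by simp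
  rcases hτ with hτ | hτ
  · exact ⟨a * k, .inl fun j => by
      obtain ⟨i, rfl⟩ := σ.surjective j
      rw [hconj, hσ, hσ, hτ]
      ring⟩
  · exact ⟨2 * c + a * k, .inr fun j => by
      obtain ⟨i, rfl⟩ := σ.surjective j
      rw [hconj, hσ, hσ, hτ]
      ring⟩

lemma exists_apply_add_one_of_mem_normalizer (hn : 3 ≤ n) {σ : Perm (Fin n)}
    (hσ : σ ∈ normalizer (dihedralSubgroup n : Set (Perm (Fin n)))) :
    ∃ k, ∀ i, σ (i + 1) = σ i + k := by
  have hconj (i) : (σ * finRotate n * σ⁻¹) (σ i) = σ (i + 1) := by simp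
  obtain ⟨a, hτ | hτ⟩ := (mem_normalizer_iff.mp hσ (finRotate n)).mp
    (closure_finRotate_revPerm (n := n) ▸ subset_closure (by simp))
  · exact ⟨a, fun i => by rw [← hconj, hτ, add_comm]⟩
  · have h2 : σ (0 + 1 + 1) = σ 0 := by
      rw [← hconj, hτ, ← hconj, hτ]
      ring
    exact absurd (by simpa using σ.injective h2) (one_add_one_ne_zero hn)

lemma mem_normalizer_dihedralSubgroup_iff (hn : 3 ≤ n) {σ : Perm (Fin n)} :
    σ ∈ normalizer (dihedralSubgroup n : Set (Perm (Fin n))) ↔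
      ∃ c k : Fin n, k.val.Coprime n ∧ ∀ i, σ i = c + i * k := by
  refine ⟨fun hσ => ?_, fun ⟨_, _, _, hσ⟩ => mem_normalizer_of_apply_eq_add_mul hσ⟩
  obtain ⟨k, hk⟩ := exists_apply_add_one_of_mem_normalizer hn hσ
  have hσ := apply_eq_add_mul_of_apply_add_one hk
  obtain ⟨i, hi⟩ := σ.surjective (σ 0 + 1)
  rw [hσ i] at hi
  exact ⟨σ 0, k, coprime_val_of_mul_eq_one (add_left_cancel hi), hσ⟩

lemma coe_normalizer_dihedralSubgroup (hn : 3 ≤ n) :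
    (normalizer (dihedralSubgroup n : Set (Perm (Fin n))) : Set (Perm (Fin n))) =
      Set.range fun p : Fin n × {k : Fin n // k.val.Coprime n} => affinePerm p.1 p.2.1 p.2.2 := by
  ext σ
  rw [SetLike.mem_coe, mem_normalizer_dihedralSubgroup_iff hn]
  constructor
  · rintro ⟨c, k, hk, hσ⟩
    exact ⟨(c, ⟨k, hk⟩), Equiv.ext fun i => (hσ i).symm⟩
  · rintro ⟨⟨c, k, hk⟩, rfl⟩
    exact ⟨c, k, hk, fun _ => rfl⟩

lemma card_normalizer_dihedralSubgroup (hn : 3 ≤ n) :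
    Nat.card (normalizer (dihedralSubgroup n : Set (Perm (Fin n)))) = n * n.totient := by
  rw [← SetLike.coe_sort_coe, coe_normalizer_dihedralSubgroup hn,
    Nat.card_range_of_injective affinePerm_injective, Nat.card_prod, Nat.card_eq_fintype_card,
    Fintype.card_fin, card_coprime_val]

end Fin

/-- For `n ≥ 3`, the normalizer in `S_n` of the dihedral subgroup generated by the `n`-cycle
`g = finRotate n` and the reversal `h = Fin.revPerm` (on `{1,…,n}` modelled as `Fin n`)
is exactly the set of permutations `σ_{x,k} : i ↦ x + (i-1)k (mod n)` with
`x, k ∈ {1,…,n}` and `gcd(k,n) = 1`; consequently it has cardinality `n * φ(n)`. -/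
theorem normalizer_dihedral_subgroup (n : ℕ) (hn : 3 ≤ n) :
    ((Subgroup.normalizer ((Subgroup.closure {finRotate n, Fin.revPerm} :
        Subgroup (Equiv.Perm (Fin n))) : Set (Equiv.Perm (Fin n))) :
        Subgroup (Equiv.Perm (Fin n))) : Set (Equiv.Perm (Fin n))) =
      {σ : Equiv.Perm (Fin n) | ∃ x k : ℕ, 1 ≤ x ∧ x ≤ n ∧ 1 ≤ k ∧ k ≤ n ∧
        Nat.gcd k n = 1 ∧ ∀ i : Fin n, (σ i).val = (x - 1 + i.val * k) % n} ∧
    Nat.card (Subgroup.normalizer ((Subgroup.closure {finRotate n, Fin.revPerm} :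
        Subgroup (Equiv.Perm (Fin n))) : Set (Equiv.Perm (Fin n))))
      = n * Nat.totient n := by
  have : NeZero n := ⟨by omega⟩
  rw [Fin.closure_finRotate_revPerm]
  refine ⟨Set.ext fun σ => ?_, Fin.card_normalizer_dihedralSubgroup hn⟩
  exact (Fin.mem_normalizer_dihedralSubgroup_iff hn).trans
    (Fin.exists_add_mul_iff_exists_nat (by omega) σ)
end

section
/- For odd n ≥ 3, the dihedral group D_{2n} = ⟨g, h | g^n = h^2 = 1, gh = hg^{n-1}⟩ has exactly n² + 1 endomorphisms and exactly n·φ(n) automorphisms. -/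
/-!
A homomorphism out of `D_{2n}` is determined by the images of `r 1` and `sr 0`. For odd `n` the
only element of order dividing both `2` and `n` is `1`, so `sr 0` goes either to `1`, which
kills everything, or to a reflection `sr j`, while `r 1` must go to a rotation `r i`. Every
such pair `(i, j)` occurs, through the endomorphism `r k ↦ r (i k)`, `sr k ↦ sr (j + i k)`.
These compose like the affine maps `k ↦ j + i k` of `ZMod n`, so the automorphisms are exactly
those with `i` a unit.
-/

namespace DihedralGroup

variable {n : ℕ}

theorem hom_ext {G : Type*} [Group G] {f g : DihedralGroup n →* G}
    (hr : f (r 1) = g (r 1)) (hs : f (sr 0) = g (sr 0)) : f = g := by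
  have hr' : ∀ k, f (r k) = g (r k) := fun k => by
    rw [← ZMod.intCast_zmod_cast k, ← r_one_zpow, map_zpow, map_zpow, hr]
  ext (k | k)
  · exact hr' k
  · rw [show sr k = sr 0 * r k by rw [sr_mul_r, zero_add], map_mul, map_mul, hs, hr']

theorem sr_pow_of_odd {m : ℕ} (hm : Odd m) (k : ZMod n) : sr k ^ m = sr k := by
  obtain ⟨m, rfl⟩ := hm
  rw [pow_succ, pow_mul, sq, sr_mul_self, one_pow, one_mul]

theorem r_pow_n (i : ZMod n) : r i ^ n = 1 := by
  rw [r_pow, ZMod.natCast_self, mul_zero, r_zero]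

def affineEndo (i j : ZMod n) : DihedralGroup n →* DihedralGroup n where
  toFun
    | r k => r (i * k)
    | sr k => sr (j + i * k)
  map_one' := congrArg r (mul_zero i)
  map_mul' x y := by
    rcases x with k | k <;> rcases y with l | l <;>
      simp only [r_mul_r, r_mul_sr, sr_mul_r, sr_mul_sr] <;> (congr 1; ring)

@[simp]
theorem affineEndo_r (i j k : ZMod n) : affineEndo i j (r k) = r (i * k) := rfl

@[simp]
theorem affineEndo_sr (i j k : ZMod n) : affineEndo i j (sr k) = sr (j + i * k) := rfl

theorem affineEndo_comp (i j i' j' : ZMod n) :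
    (affineEndo i j).comp (affineEndo i' j') = affineEndo (i * i') (j + i * j') :=
  hom_ext (by simp) (by simp)

theorem affineEndo_one_zero : affineEndo (1 : ZMod n) 0 = MonoidHom.id _ :=
  hom_ext (by simp) (by simp)

theorem affineEndo_ne_one (i j : ZMod n) : affineEndo i j ≠ 1 := fun h => by
  simpa [one_def, -r_zero] using DFunLike.congr_fun h (sr 0)

theorem affineEndo_inj {i j i' j' : ZMod n} :
    affineEndo i j = affineEndo i' j' ↔ i = i' ∧ j = j' := by
  refine ⟨fun h => ?_, fun ⟨hi, hj⟩ => hi ▸ hj ▸ rfl⟩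
  have hr := DFunLike.congr_fun h (r 1)
  have hs := DFunLike.congr_fun h (sr 0)
  simp only [affineEndo_r, affineEndo_sr, mul_one, mul_zero, add_zero, r.injEq, sr.injEq] at hr hs
  exact ⟨hr, hs⟩

def affineAut (u : (ZMod n)ˣ) (j : ZMod n) : MulAut (DihedralGroup n) :=
  (affineEndo (u : ZMod n) j).toMulEquiv (affineEndo ↑u⁻¹ (-(↑u⁻¹ * j)))
    (by rw [affineEndo_comp, Units.inv_mul, neg_add_cancel, affineEndo_one_zero])
    (by rw [affineEndo_comp, Units.mul_inv, mul_neg, ← mul_assoc, Units.mul_inv, one_mul,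
      add_neg_cancel, affineEndo_one_zero])

theorem eq_one_or_eq_affineEndo (hodd : Odd n) (f : DihedralGroup n →* DihedralGroup n) :
    f = 1 ∨ ∃ i j, f = affineEndo i j := by
  have eq_one : ∀ x : DihedralGroup n, x ^ 2 = 1 → x ^ n = 1 → x = 1 := fun x h2 hn => by
    simpa [Nat.coprime_two_left.mpr hodd] using pow_gcd_eq_one.mpr ⟨h2, hn⟩
  have hs_sq : ∀ k, f (sr k) ^ 2 = 1 := fun k => by rw [← map_pow, sq, sr_mul_self, map_one]
  have hr_pow : f (r 1) ^ n = 1 := by rw [← map_pow, r_one_pow_n, map_one]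
  rcases hs : f (sr 0) with m | j
  · left
    have hs1 : f (sr 0) = 1 := eq_one _ (hs_sq 0) (by rw [hs, r_pow_n])
    have hr1 : f (r 1) = f (sr 1) := by
      rw [← one_mul (f (sr 1)), ← hs1, ← map_mul, sr_mul_sr, sub_zero]
    exact hom_ext (by rw [eq_one _ (hr1 ▸ hs_sq 1) hr_pow]; rfl) (by rw [hs1]; rfl)
  · right
    rcases hr : f (r 1) with i | m
    · exact ⟨i, j, hom_ext (by simp [hr]) (by simp [hs])⟩
    · rw [hr, sr_pow_of_odd hodd] at hr_pow
      exact absurd hr_pow (by simp [one_def, -r_zero])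

theorem exists_eq_affineEndo_of_injective (hodd : Odd n) {f : DihedralGroup n →* DihedralGroup n}
    (hf : Function.Injective f) : ∃ i j, f = affineEndo i j := by
  refine (eq_one_or_eq_affineEndo hodd f).resolve_left fun h => ?_
  have : sr (0 : ZMod n) = 1 := hf (by rw [h, map_one, MonoidHom.one_apply])
  simp [one_def, -r_zero] at this

theorem card_monoidHom_of_odd (hodd : Odd n) :
    Nat.card (DihedralGroup n →* DihedralGroup n) = n ^ 2 + 1 := by
  have hbij : Function.Bijective fun o : Option (ZMod n × ZMod n) =>
      o.elim (1 : DihedralGroup n →* DihedralGroup n) fun p => affineEndo p.1 p.2 := by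
    refine ⟨?_, fun f => ?_⟩
    · rintro (_ | p) (_ | q) h
      · rfl
      · exact absurd h.symm (affineEndo_ne_one _ _)
      · exact absurd h (affineEndo_ne_one _ _)
      · exact congrArg some (Prod.ext_iff.mpr (affineEndo_inj.mp h))
    · rcases eq_one_or_eq_affineEndo hodd f with rfl | ⟨i, j, rfl⟩
      exacts [⟨none, rfl⟩, ⟨some (i, j), rfl⟩]
  have : NeZero n := ⟨hodd.pos.ne'⟩
  rw [← Nat.card_eq_of_bijective _ hbij, Finite.card_option, Nat.card_prod, Nat.card_zmod, sq]

theorem exists_affineAut_eq (hodd : Odd n) (α : MulAut (DihedralGroup n)) :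
    ∃ u j, affineAut u j = α := by
  obtain ⟨i, j, hα⟩ :=
    exists_eq_affineEndo_of_injective hodd (f := α.toMonoidHom) α.injective
  obtain ⟨i', j', hα'⟩ :=
    exists_eq_affineEndo_of_injective hodd (f := α.symm.toMonoidHom) α.symm.injective
  have hcomp : (affineEndo i j).comp (affineEndo i' j') = affineEndo 1 0 := by
    rw [← hα, ← hα', affineEndo_one_zero]
    exact MonoidHom.ext α.apply_symm_apply
  rw [affineEndo_comp] at hcomp
  have hunit : i * i' = 1 := (affineEndo_inj.mp hcomp).1
  exact ⟨Units.mkOfMulEqOne i i' hunit, j,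
    MulEquiv.ext fun x => (DFunLike.congr_fun hα x).symm⟩

theorem card_mulAut_of_odd (hodd : Odd n) :
    Nat.card (MulAut (DihedralGroup n)) = n * n.totient := by
  have hbij : Function.Bijective fun p : (ZMod n)ˣ × ZMod n => affineAut p.1 p.2 := by
    refine ⟨fun ⟨u, j⟩ ⟨u', j'⟩ h => ?_, fun α => ?_⟩
    · obtain ⟨hu, hj⟩ := affineEndo_inj.mp (congrArg MulEquiv.toMonoidHom h)
      exact Prod.ext (Units.ext hu) hj
    · obtain ⟨u, j, h⟩ := exists_affineAut_eq hodd α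
      exact ⟨(u, j), h⟩
  have : NeZero n := ⟨hodd.pos.ne'⟩
  rw [← Nat.card_eq_of_bijective _ hbij, Nat.card_prod, Nat.card_eq_fintype_card,
    ZMod.card_units_eq_totient, Nat.card_zmod, mul_comm]

end DihedralGroup

theorem card_endomorphisms_dihedral_odd_general (n : ℕ) (hodd : Odd n) :
    Nat.card (DihedralGroup n →* DihedralGroup n) = n ^ 2 + 1 ∧
    Nat.card (MulAut (DihedralGroup n)) = n * Nat.totient n :=
  ⟨DihedralGroup.card_monoidHom_of_odd hodd, DihedralGroup.card_mulAut_of_odd hodd⟩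

/-- For odd `n ≥ 3`, the dihedral group `D_{2n}` has exactly `n² + 1` endomorphisms
and exactly `n·φ(n)` automorphisms. -/
theorem card_endomorphisms_dihedral_odd (n : ℕ) (hn : 3 ≤ n) (hodd : Odd n) :
    Nat.card (DihedralGroup n →* DihedralGroup n) = n ^ 2 + 1 ∧
    Nat.card (MulAut (DihedralGroup n)) = n * Nat.totient n :=
  card_endomorphisms_dihedral_odd_general n hodd
end
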